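/- Let G be a finite simple graph with at least one edge and H a finite simple graph that is not a complete graph (i.e., H has two distinct nonadjacent vertices). Then the independence complex Ind(G[H]) of the lexicographical product G[H] is not shellable. -/

import Mathlib

open Finset

variable {V : Type*}

/-- A facet of a collection of faces `Δ` is a maximal face. -/
def IsFacet (Δ : Set (Finset V)) (F : Finset V) : Prop :=
  F ∈ Δ ∧ ∀ G ∈ Δ, F ⊆ G → F = G

/-- A complex is pure if all facets have the same cardinality. -/
def IsPure (Δ : Set (Finset V)) : Prop :=
  ∀ F G, IsFacet Δ F → IsFacet Δ G → F.card = G.card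

/-- Deletion of a vertex from a complex. -/
def del (Δ : Set (Finset V)) (x : V) : Set (Finset V) := {F ∈ Δ | x ∉ F}

/-- Link of a vertex in a complex. -/
def link [DecidableEq V] (Δ : Set (Finset V)) (x : V) : Set (Finset V) :=
  {F ∈ Δ | x ∉ F ∧ insert x F ∈ Δ}

/-- `F : Fin s → Finset V` is a shelling order of the facets of `Δ`. -/
def IsShelling [DecidableEq V] (Δ : Set (Finset V)) {s : ℕ} (F : Fin s → Finset V) : Prop :=
  (∀ i, IsFacet Δ (F i)) ∧ (∀ G, IsFacet Δ G → ∃ i, F i = G) ∧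
  Function.Injective F ∧
  (∀ i j : Fin s, j < i → ∃ x ∈ F i \ F j, ∃ k, k < i ∧ F i \ F k = {x})

/-- A complex is shellable if it is pure and admits a shelling order of its facets. -/
def Shellable [DecidableEq V] (Δ : Set (Finset V)) : Prop :=
  IsPure Δ ∧ ∃ (s : ℕ) (F : Fin s → Finset V), IsShelling Δ F

/-- A pure complex is vertex decomposable if it is a simplex (unique facet), or some vertex
has pure, vertex decomposable deletion and link. -/
inductive VertexDecomposable [DecidableEq V] : Set (Finset V) → Prop
  | simplex (Δ : Set (Finset V)) (h : ∃! F, IsFacet Δ F) : VertexDecomposable Δ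
  | step (Δ : Set (Finset V)) (x : V)
      (hdp : IsPure (del Δ x)) (hlp : IsPure (link Δ x))
      (hd : VertexDecomposable (del Δ x)) (hl : VertexDecomposable (link Δ x)) :
      VertexDecomposable Δ

/-- The independence complex of a graph: all independent sets. -/
def indComplex (G : SimpleGraph V) : Set (Finset V) :=
  {F | ∀ v ∈ F, ∀ w ∈ F, ¬ G.Adj v w}

/-- The lexicographical product `G[H]`. -/
def lexProd {α β : Type*} (G : SimpleGraph α) (H : SimpleGraph β) :
    SimpleGraph (α × β) where
  Adj p q := G.Adj p.1 q.1 ∨ (p.1 = q.1 ∧ H.Adj p.2 q.2)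
  symm := by
    constructor
    rintro p q (h | ⟨h1, h2⟩)
    · exact Or.inl h.symm
    · exact Or.inr ⟨h1.symm, h2.symm⟩
  loopless := by
    constructor
    rintro p (h | ⟨_, h⟩)
    · exact G.irrefl h
    · exact H.irrefl h

/-- The independence number of a graph. -/
noncomputable def indepNum (G : SimpleGraph V) : ℕ :=
  sSup {n | ∃ F : Finset V, F ∈ indComplex G ∧ F.card = n}

/-- The expansion of a graph `G`, where vertex `v` is replaced by `s v` copies,
and distinct vertices `(i,j)` and `(k,l)` are adjacent iff `i ~ k` in `G` or `i = k`. -/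
def expansion (G : SimpleGraph V) (s : V → ℕ) : SimpleGraph (Σ v : V, Fin (s v)) where
  Adj p q := p ≠ q ∧ (G.Adj p.1 q.1 ∨ p.1 = q.1)
  symm := by
    constructor
    rintro p q ⟨h1, h2 | h2⟩
    · exact ⟨h1.symm, Or.inl h2.symm⟩
    · exact ⟨h1.symm, Or.inr h2.symm⟩
  loopless := by constructor; rintro p ⟨h, _⟩; exact h rfl

/-- The circulant graph `C_n(S)`: vertices `x_a`, `x_b` are adjacent iff
`|a-b| ∈ S` or `n - |a-b| ∈ S`. -/
def circulant (n : ℕ) (S : Set ℕ) : SimpleGraph (Fin n) where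
  Adj a b := a ≠ b ∧ ((max a.val b.val - min a.val b.val) ∈ S ∨
      (n - (max a.val b.val - min a.val b.val)) ∈ S)
  symm := by
    constructor
    rintro a b ⟨h1, h2⟩
    refine ⟨h1.symm, ?_⟩
    rwa [max_comm, min_comm]
  loopless := by constructor; rintro a ⟨h, _⟩; exact h rfl

/-!
Write `π` for the projection `V(G[H]) → V(G)`. The projection of a facet of `Ind(G[H])` is a
facet of `Ind(G)`, and an edge `v ~ w` of `G` yields two facets with different projections.
If `Ind(G[H])` is pure, every nonempty fibre of a facet has at least two vertices: otherwise
replacing it by `{a} × {y, z}` would give a larger face. Hence for facets `S`, `T` with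
`π S ≠ π T`, so `π S ⊄ π T`, the difference `S \ T` contains a whole fibre of `S` and has at
least two elements. But the first facet of a shelling whose projection differs from that of the
first facet is glued along a codimension-one face onto an earlier facet, whose projection is the
first one.
-/

section Complex

theorem exists_isFacet_superset [Finite V] {Δ : Set (Finset V)} {F : Finset V} (hF : F ∈ Δ) :
    ∃ S, IsFacet Δ S ∧ F ⊆ S := by
  obtain ⟨S, hS, hmax⟩ := Set.Finite.exists_maximalFor card
    {S | S ∈ Δ ∧ F ⊆ S} (Set.toFinite _) ⟨F, hF, subset_rfl⟩
  refine ⟨S, ⟨hS.1, fun T hT hST => ?_⟩, hS.2⟩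
  exact eq_of_subset_of_card_le hST (hmax ⟨hT, hS.2.trans hST⟩ (card_le_card hST))

theorem IsShelling.exists_sdiff_eq_singleton_of_ne [DecidableEq V] {γ : Type*}
    {Δ : Set (Finset V)} {s : ℕ} {F : Fin s → Finset V} (hF : IsShelling Δ F)
    (f : Finset V → γ) {S T : Finset V} (hS : IsFacet Δ S) (hT : IsFacet Δ T)
    (hST : f S ≠ f T) :
    ∃ S' T' x, IsFacet Δ S' ∧ IsFacet Δ T' ∧ f S' ≠ f T' ∧ S' \ T' = {x} := by
  obtain ⟨hfacet, hsurj, -, hshell⟩ := hF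
  obtain ⟨iS, rfl⟩ := hsurj S hS
  obtain ⟨iT, rfl⟩ := hsurj T hT
  have : NeZero s := NeZero.of_pos iS.pos
  have hne : {i | f (F i) ≠ f (F 0)}.Nonempty := by
    by_cases h : f (F iS) = f (F 0)
    · exact ⟨iT, fun h' => hST (h.trans h'.symm)⟩
    · exact ⟨iS, h⟩
  -- the first facet whose value differs from that of `F 0` is glued onto an earlier one
  obtain ⟨i, hi, hmin⟩ := wellFounded_lt.has_min _ hne
  have hi0 : 0 < i := (Fin.pos_iff_ne_zero' i).2 fun h => hi (h ▸ rfl)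
  obtain ⟨x, -, k, hki, hx⟩ := hshell i 0 hi0
  have hk : f (F k) = f (F 0) := by_contra fun h => hmin k h hki
  exact ⟨F i, F k, x, hfacet i, hfacet k, hk ▸ hi, hx⟩

variable {G : SimpleGraph V}

theorem singleton_mem_indComplex (v : V) : {v} ∈ indComplex G := by
  simp [indComplex]

theorem insert_mem_indComplex [DecidableEq V] {v : V} {F : Finset V} (hF : F ∈ indComplex G)
    (hv : ∀ w ∈ F, ¬ G.Adj v w) : insert v F ∈ indComplex G := by
  intro p hp q hq
  rw [mem_insert] at hp hq
  rcases hp with rfl | hp <;> rcases hq with rfl | hq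
  · exact G.irrefl
  · exact hv q hq
  · exact fun h => hv p hp h.symm
  · exact hF p hp q hq

theorem pair_mem_indComplex [DecidableEq V] {v w : V} (h : ¬ G.Adj v w) :
    {v, w} ∈ indComplex G :=
  insert_mem_indComplex (singleton_mem_indComplex w) (by simpa using h)

theorem union_mem_indComplex [DecidableEq V] {A B : Finset V} (hA : A ∈ indComplex G)
    (hB : B ∈ indComplex G) (hAB : ∀ a ∈ A, ∀ b ∈ B, ¬ G.Adj a b) : A ∪ B ∈ indComplex G := by
  intro p hp q hq
  rcases mem_union.1 hp with hp | hp <;> rcases mem_union.1 hq with hq | hq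
  · exact hA p hp q hq
  · exact hAB p hp q hq
  · exact fun h => hAB q hq p hp h.symm
  · exact hB p hp q hq

theorem mem_indComplex_of_subset {A B : Finset V} (hB : B ∈ indComplex G) (hAB : A ⊆ B) :
    A ∈ indComplex G :=
  fun p hp q hq => hB p (hAB hp) q (hAB hq)

end Complex

section LexProd

variable {α β : Type*} {G : SimpleGraph α} {H : SimpleGraph β}

theorem lexProd_adj_of_fst_ne {p q : α × β} (h : p.1 ≠ q.1) :
    (lexProd G H).Adj p q ↔ G.Adj p.1 q.1 := by
  simp [lexProd, h]

theorem singleton_product_mem_indComplex (a : α) {M : Finset β} (hM : M ∈ indComplex H) :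
    {a} ×ˢ M ∈ indComplex (lexProd G H) := by
  intro p hp q hq
  rw [mem_product, mem_singleton] at hp hq
  rintro (h | ⟨-, h⟩)
  · rw [hp.1, hq.1] at h
    exact G.irrefl h
  · exact hM _ hp.2 _ hq.2 h

theorem image_fst_mem_indComplex [DecidableEq α] {S : Finset (α × β)}
    (hS : S ∈ indComplex (lexProd G H)) :
    S.image Prod.fst ∈ indComplex G := by
  simp only [indComplex, Set.mem_ofPred_eq, forall_mem_image]
  exact fun p hp q hq hadj => hS p hp q hq (Or.inl hadj)

theorem IsFacet.image_fst [DecidableEq α] [DecidableEq β] [Nonempty β] {S : Finset (α × β)}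
    (hS : IsFacet (indComplex (lexProd G H)) S) : IsFacet (indComplex G) (S.image Prod.fst) := by
  refine ⟨image_fst_mem_indComplex hS.1, fun A hA hsub => hsub.antisymm fun c hc => ?_⟩
  by_contra hcS
  obtain ⟨b⟩ := ‹Nonempty β›
  have hins : insert (c, b) S ∈ indComplex (lexProd G H) := by
    refine insert_mem_indComplex hS.1 fun p hp => ?_
    have hpS := mem_image_of_mem Prod.fst hp
    rw [lexProd_adj_of_fst_ne fun h : c = p.1 => hcS (h ▸ hpS)]
    exact hA c hc p.1 (hsub hpS)
  have hcbS : (c, b) ∈ S := hS.2 _ hins (subset_insert _ _) ▸ mem_insert_self _ _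
  exact hcS (mem_image_of_mem Prod.fst hcbS)

variable [DecidableEq α] [Finite α] [Finite β]

theorem exists_isFacet_image_fst_ne {v w : α} (hvw : G.Adj v w) (b : β) :
    ∃ S T, IsFacet (indComplex (lexProd G H)) S ∧ IsFacet (indComplex (lexProd G H)) T ∧
      S.image Prod.fst ≠ T.image Prod.fst := by
  obtain ⟨S, hS, hvS⟩ :=
    exists_isFacet_superset (singleton_mem_indComplex (G := lexProd G H) (v, b))
  obtain ⟨T, hT, hwT⟩ :=
    exists_isFacet_superset (singleton_mem_indComplex (G := lexProd G H) (w, b))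
  refine ⟨S, T, hS, hT, fun h => ?_⟩
  have hv : v ∈ T.image Prod.fst := h ▸ mem_image_of_mem Prod.fst (hvS (mem_singleton_self _))
  have hw : w ∈ T.image Prod.fst := mem_image_of_mem Prod.fst (hwT (mem_singleton_self _))
  exact image_fst_mem_indComplex hT.1 v hv w hw hvw

theorem IsFacet.two_le_card_filter_fst_eq [DecidableEq β]
    (hpure : IsPure (indComplex (lexProd G H)))
    {y z : β} (hyz : y ≠ z) (hna : ¬ H.Adj y z) {S : Finset (α × β)}
    (hS : IsFacet (indComplex (lexProd G H)) S) {a : α} (ha : a ∈ S.image Prod.fst) :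
    2 ≤ (S.filter (·.1 = a)).card := by
  obtain ⟨p₀, hp₀, rfl⟩ := mem_image.1 ha
  let R := S.filter (fun p => ¬ p.1 = p₀.1)
  have hR : R ∪ {p₀.1} ×ˢ {y, z} ∈ indComplex (lexProd G H) := by
    refine union_mem_indComplex (mem_indComplex_of_subset hS.1 (filter_subset _ _))
      (singleton_product_mem_indComplex _ (pair_mem_indComplex hna)) fun p hp q hq => ?_
    obtain ⟨hpS, hp⟩ := mem_filter.1 hp
    have hq : q.1 = p₀.1 := mem_singleton.1 (mem_product.1 hq).1
    rw [lexProd_adj_of_fst_ne (hq ▸ hp), hq]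
    exact fun h => hS.1 p hpS p₀ hp₀ (Or.inl h)
  have hdisj : Disjoint R ({p₀.1} ×ˢ {y, z}) := by
    refine disjoint_left.2 fun p hp hq => (mem_filter.1 hp).2 ?_
    exact mem_singleton.1 (mem_product.1 hq).1
  obtain ⟨T, hT, hRT⟩ := exists_isFacet_superset hR
  have hcard := card_le_card hRT
  rw [card_union_of_disjoint hdisj, card_product, card_singleton, card_pair hyz,
    ← hpure S T hS hT] at hcard
  have hsplit : (S.filter (·.1 = p₀.1)).card + R.card = S.card :=
    card_filter_add_card_filter_not _
  omega

theorem IsFacet.sdiff_ne_singleton_of_image_fst_ne [DecidableEq β]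
    (hpure : IsPure (indComplex (lexProd G H)))
    {y z : β} (hyz : y ≠ z) (hna : ¬ H.Adj y z) {S T : Finset (α × β)}
    (hS : IsFacet (indComplex (lexProd G H)) S) (hT : IsFacet (indComplex (lexProd G H)) T)
    (hST : S.image Prod.fst ≠ T.image Prod.fst) (x : α × β) : S \ T ≠ {x} := by
  have : Nonempty β := ⟨y⟩
  have hnsub : ¬ S.image Prod.fst ⊆ T.image Prod.fst :=
    fun h => hST (hS.image_fst.2 _ (image_fst_mem_indComplex hT.1) h)
  obtain ⟨a, haS, haT⟩ := not_subset.1 hnsub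
  have hfibre : S.filter (·.1 = a) ⊆ S \ T := fun p hp =>
    mem_sdiff.2 ⟨(mem_filter.1 hp).1,
      fun hpT => haT ((mem_filter.1 hp).2 ▸ mem_image_of_mem _ hpT)⟩
  intro hx
  have hle := card_le_card hfibre
  rw [hx, card_singleton] at hle
  have := hS.two_le_card_filter_fst_eq hpure hyz hna haS
  omega

end LexProd

theorem stmt5 {α β : Type*} [Fintype α] [Fintype β] [DecidableEq α] [DecidableEq β]
    (G : SimpleGraph α) (H : SimpleGraph β)
    (hG : ∃ v w, G.Adj v w)
    (y z : β) (hyz : y ≠ z) (hna : ¬ H.Adj y z) :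
    ¬ Shellable (indComplex (lexProd G H)) := by
  rintro ⟨hpure, s, F, hF⟩
  obtain ⟨v, w, hvw⟩ := hG
  obtain ⟨S, T, hS, hT, hST⟩ := exists_isFacet_image_fst_ne (H := H) hvw y
  obtain ⟨S', T', x, hS', hT', hST', hx⟩ :=
    hF.exists_sdiff_eq_singleton_of_ne (·.image Prod.fst) hS hT hST
  exact hS'.sdiff_ne_singleton_of_image_fst_ne hpure hyz hna hT' hST' x hx
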